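/- arXiv:2409.11166 — 7 statements merged into one kernel-verified Lean document; each statement's English description precedes it below -/
import Mathlib

section
/- Let d ≥ 1 be an integer, let w > 0, let c ∈ ℝ^d, and let ε_2, …, ε_d ∈ {−1, +1}. For u = 1, …, d let σ_u be the axis-aligned hypercube of width w centered at c + Σ_{v=2}^{u} ε_v·w·e_{v−1}, and set m = c + Σ_{v=2}^{d} ε_v·(w/2)·e_{v−1}. Then the two axis-aligned hypercubes H₁ and H₂ of width w/2 centered at m + (w/2)·e_d and m − (w/2)·e_d, respectively, are both contained in ⋂_{u=1}^{d} σ_u, and H₁ and H₂ have disjoint interiors. -/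
lemma sum_single_apply' {d : ℕ} (P : Fin d → Prop) [DecidablePred P]
    (a : ℝ) (ε : Fin d → ℝ) (k : Fin d) :
    (∑ j : Fin d, if P j then ε j • a • (Pi.single j (1:ℝ) : Fin d → ℝ) else 0) k
      = if P k then ε k * a else 0 := by
  rw [Finset.sum_apply]
  rw [Finset.sum_congr rfl (fun j _ =>
    show (if P j then ε j • a • (Pi.single j (1:ℝ) : Fin d → ℝ) else 0) k
      = if j = k then (if P j then ε j * a else 0) else 0 from ?_),
    Finset.sum_ite_eq' Finset.univ k (fun j => if P j then ε j * a else 0)]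
  · simp
  · simp only [apply_ite (fun f : Fin d → ℝ => f k), Pi.smul_apply, Pi.single_apply,
      Pi.zero_apply, smul_eq_mul]
    by_cases h2 : j = k
    · subst h2; simp
    · simp [h2]; intro _ h'; exact absurd h'.symm h2

/-- Lemma 2(i) (claim:lb_hyper): for the hypercubes `σ_u` of width `w` (closed L∞
balls in `Fin d → ℝ` with the sup metric) centered at
`c + ∑_{j < u} ε_j • w • e_j` (the hypercubes corresponding to a root-to-leaf path
in one block of the lower-bound tree), the two hypercubes of width `w/2` centered at
`m ± (w/2) • e_{d-1}`, where `m = c + ∑_{j < d-1} ε_j • (w/2) • e_j`, are both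
contained in `⋂ u, σ_u` and have disjoint interiors. -/
theorem stmt_2 (d : ℕ) (hd : 1 ≤ d) (w : ℝ) (hw : 0 < w) (c : Fin d → ℝ)
    (ε : Fin d → ℝ) (hε : ∀ v, ε v = 1 ∨ ε v = -1) :
    let σ : Fin d → Set (Fin d → ℝ) := fun u =>
      Metric.closedBall
        (c + ∑ j : Fin d,
          if (j : ℕ) < (u : ℕ) then ε j • w • (Pi.single j 1 : Fin d → ℝ) else 0) w
    let m : Fin d → ℝ := c + ∑ j : Fin d,
      if (j : ℕ) < d - 1 then ε j • (w / 2) • (Pi.single j 1 : Fin d → ℝ) else 0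
    let ed : Fin d → ℝ := Pi.single (⟨d - 1, by omega⟩ : Fin d) 1
    Metric.closedBall (m + (w / 2) • ed) (w / 2) ⊆ (⋂ u, σ u) ∧
    Metric.closedBall (m - (w / 2) • ed) (w / 2) ⊆ (⋂ u, σ u) ∧
    Disjoint (interior (Metric.closedBall (m + (w / 2) • ed) (w / 2)))
      (interior (Metric.closedBall (m - (w / 2) • ed) (w / 2))) := by
  intro σ m ed
  set kd : Fin d := ⟨d - 1, by omega⟩ with hkd
  have hed : ∀ j : Fin d, ed j = if j = kd then 1 else 0 := fun j => Pi.single_apply kd 1 j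
  have hm : ∀ j : Fin d, m j = c j + (if (j : ℕ) < d - 1 then ε j * (w / 2) else 0) := by
    intro j
    show c j + _ = _
    rw [sum_single_apply' (fun j : Fin d => (j : ℕ) < d - 1) (w / 2) ε j]
  have hw2 : (0 : ℝ) ≤ w / 2 := by linarith
  -- general containment claim
  have key : ∀ t : ℝ, |t| ≤ w / 2 →
      Metric.closedBall (m + t • ed) (w / 2) ⊆ ⋂ u, σ u := by
    intro t ht x hx
    rw [Metric.mem_closedBall, dist_pi_le_iff hw2] at hx
    refine Set.mem_iInter.2 fun u => ?_
    rw [Metric.mem_closedBall, dist_pi_le_iff hw.le]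
    intro j
    have hxj := hx j
    rw [Real.dist_eq] at hxj ⊢
    have hcu : (c + ∑ j : Fin d,
        if (j : ℕ) < (u : ℕ) then ε j • w • (Pi.single j 1 : Fin d → ℝ) else 0) j
        = c j + (if (j : ℕ) < (u : ℕ) then ε j * w else 0) := by
      show c j + _ = _
      rw [sum_single_apply' (fun j : Fin d => (j : ℕ) < (u : ℕ)) w ε j]
    rw [hcu]
    have hcent : (m + t • ed) j = m j + t * ed j := rfl
    rw [hcent, hm j, hed j] at hxj
    rcases eq_or_ne j kd with hj | hj
    · have hj' : (j : ℕ) = d - 1 := by rw [hj]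
      have h1 : ¬ ((j : ℕ) < d - 1) := by omega
      have h2 : ¬ ((j : ℕ) < (u : ℕ)) := by have := u.isLt; omega
      rw [if_pos hj, if_neg h1] at hxj
      rw [if_neg h2]
      rw [abs_le] at hxj ⊢
      rw [abs_le] at ht
      constructor <;> [linarith [hxj.1]; linarith [hxj.2]]
    · have hj' : (j : ℕ) < d - 1 := by
        have := j.isLt
        have : (j : ℕ) ≠ d - 1 := fun h => hj (Fin.ext h)
        omega
      rw [if_neg hj, if_pos hj'] at hxj
      rcases hε j with hs | hs <;>
        by_cases hu : (j : ℕ) < (u : ℕ) <;>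
          simp only [if_pos, hu, if_neg, hs, if_true, if_false] <;>
            rw [abs_le] at hxj ⊢ <;>
              constructor <;> nlinarith [hxj.1, hxj.2]
  refine ⟨?_, ?_, ?_⟩
  · have := key (w / 2) (by rw [abs_of_nonneg hw2])
    exact this
  · have := key (-(w / 2)) (by rw [abs_neg, abs_of_nonneg hw2])
    simpa [sub_eq_add_neg, neg_smul] using this
  · rw [Set.disjoint_left]
    intro x hx1 hx2
    have hx1' := interior_subset hx1
    have hx2' := interior_subset hx2
    have h1 : x ∈ Metric.ball (m + (w / 2) • ed) (w / 2) := by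
      rwa [← interior_closedBall _ (by positivity : (w / 2 : ℝ) ≠ 0)]
    have h2 : x ∈ Metric.ball (m - (w / 2) • ed) (w / 2) := by
      rwa [← interior_closedBall _ (by positivity : (w / 2 : ℝ) ≠ 0)]
    rw [Metric.mem_ball, dist_pi_lt_iff (by positivity)] at h1 h2
    have e1 := h1 kd
    have e2 := h2 kd
    have hedkd : ed kd = 1 := by rw [hed kd, if_pos rfl]
    have c1 : (m + (w / 2) • ed) kd = m kd + w / 2 := by
      show m kd + (w / 2) * ed kd = _; rw [hedkd]; ring
    have c2 : (m - (w / 2) • ed) kd = m kd - w / 2 := by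
      show m kd - (w / 2) * ed kd = _; rw [hedkd]; ring
    rw [Real.dist_eq, c1, abs_lt] at e1
    rw [Real.dist_eq, c2, abs_lt] at e2
    linarith [e1.1, e2.2]
end

section
/- Let d ≥ 1 be an integer, let s > 0, and let σ = ∏_{j=1}^d [a_j, a_j + L] be an axis-aligned closed hypercube in ℝ^d with side length L satisfying 2s ≤ L < 3s. Then there exists an axis-aligned closed hypercube H ⊆ ℝ^d of side length exactly 2s such that σ ∩ (sℤ)^d = H ∩ (sℤ)^d. -/
/-- Claim 2 (clm_core): every axis-aligned closed hypercube of side length `L` with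
`2s ≤ L < 3s` admits a "core": an axis-aligned closed hypercube of side length
exactly `2s` containing the same points of the lattice `(sℤ)^d`. -/
theorem stmt_5 (d : ℕ) (hd : 1 ≤ d) (s L : ℝ) (hs : 0 < s)
    (hL1 : 2 * s ≤ L) (hL2 : L < 3 * s) (a : Fin d → ℝ) :
    ∃ b : Fin d → ℝ,
      {x : Fin d → ℝ | ∀ j, x j ∈ Set.Icc (a j) (a j + L)} ∩
          {x : Fin d → ℝ | ∀ j, ∃ m : ℤ, x j = s * m} =
        {x : Fin d → ℝ | ∀ j, x j ∈ Set.Icc (b j) (b j + 2 * s)} ∩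
          {x : Fin d → ℝ | ∀ j, ∃ m : ℤ, x j = s * m} := by
  refine ⟨fun j => min (s * ⌈a j / s⌉) (a j + L - 2 * s), ?_⟩
  ext x
  simp only [Set.mem_inter_iff, Set.mem_setOf_eq, Set.mem_Icc]
  constructor
  · rintro ⟨hx, hlat⟩
    refine ⟨fun j => ?_, hlat⟩
    obtain ⟨m, hm⟩ := hlat j
    obtain ⟨h1, h2⟩ := hx j
    have hceil : (⌈a j / s⌉ : ℝ) ≤ m := by
      exact_mod_cast Int.ceil_le.mpr ((div_le_iff₀ hs).mpr (by linarith [hm ▸ h1]))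
    constructor
    · refine le_trans (min_le_left _ _) ?_
      rw [hm]
      nlinarith
    · rw [hm]
      rcases le_or_gt (s * m) (min (s * ⌈a j / s⌉) (a j + L - 2 * s) + 2 * s) with h | h
      · exact h
      · exfalso
        have hc2 : a j + L - 2 * s < s * m - 2 * s ∨ s * ⌈a j / s⌉ < s * m - 2 * s := by
          rcases min_cases (s * ⌈a j / s⌉) (a j + L - 2 * s) with ⟨he, _⟩ | ⟨he, _⟩
          · right; linarith [he ▸ h]
          · left; linarith [he ▸ h]
        rcases hc2 with h' | h'
        · linarith
        · -- s * ⌈a j / s⌉ + 2s < s * m, so ⌈a j/s⌉ + 2 < m, so m ≥ ⌈a j/s⌉ + 3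
          have : (⌈a j / s⌉ : ℝ) + 2 < m := by
            have := (mul_lt_mul_iff_right₀ hs).mp (by linarith : s * (⌈a j / s⌉ + 2 : ℝ) < s * m)
            linarith
          have hm3 : (⌈a j / s⌉ : ℝ) + 3 ≤ m := by
            have h2' : (⌈a j / s⌉ : ℤ) + 2 < m := by exact_mod_cast this
            exact_mod_cast (by omega : (⌈a j / s⌉ : ℤ) + 3 ≤ m)
          have hge : a j / s ≤ (⌈a j / s⌉ : ℝ) := by
            linarith [Int.le_ceil (a j / s)]
          have : a j + 3 * s ≤ s * m := by
            have h0 : a j ≤ s * ⌈a j / s⌉ := by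
              rw [mul_comm]
              exact (div_le_iff₀ hs).mp (Int.le_ceil _) |>.trans_eq rfl
            nlinarith
          linarith
  · rintro ⟨hx, hlat⟩
    refine ⟨fun j => ?_, hlat⟩
    obtain ⟨h1, h2⟩ := hx j
    have hmin1 : min (s * ⌈a j / s⌉) (a j + L - 2 * s) + 2 * s ≤ a j + L := by
      have := min_le_right (s * ⌈a j / s⌉) (a j + L - 2 * s)
      linarith
    have hge : a j ≤ min (s * ⌈a j / s⌉) (a j + L - 2 * s) := by
      refine le_min ?_ (by linarith)
      rw [mul_comm]
      exact (div_le_iff₀ hs).mp (Int.le_ceil _)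
    exact ⟨le_trans hge h1, by linarith⟩
end

section
/- Let a, b ∈ ℂ with a ≠ b, and let Q = {a + t·(b − a) + u·i·(b − a) : t, u ∈ [0, 1]} be the square one of whose sides is the segment from a to b (here i is the imaginary unit). Then for every point p ∈ Q with p ≠ a and p ≠ b, the Euclidean angle ∠ a p b (the angle at vertex p between the segments from p to a and from p to b) is at least π/4. -/
/-!
Write `p = a + w (b - a)` with `w = t + u i`. Then
`(b - p) · conj (a - p) = (|w|² - conj w) · |b - a|²`, whose real part `(t² + u² - t) |b - a|²`
is at most its imaginary part `u |b - a|²`. The angle between two complex numbers `x, y` is the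
angle of `y · conj x` with the positive real axis, and a complex number with `re ≤ |im|` makes an
angle of at least `π/4` with that axis.
-/

open Complex ComplexConjugate Real

theorem Complex.re_le_sqrt_two_div_two_mul_norm_of_re_le_abs_im {z : ℂ} (h : z.re ≤ |z.im|) :
    z.re ≤ √2 / 2 * ‖z‖ := by
  rcases le_or_gt z.re 0 with hre | hre
  · exact hre.trans (by positivity)
  · have hsq : z.re ^ 2 ≤ z.im ^ 2 := by
      simpa only [sq_abs] using pow_le_pow_left₀ hre.le h 2
    refine le_of_pow_le_pow_left₀ two_ne_zero (by positivity) ?_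
    rw [mul_pow, div_pow, sq_sqrt zero_le_two, Complex.sq_norm, normSq_apply]
    linarith

theorem Complex.pi_div_four_le_angle_of_re_le_abs_im {x y : ℂ}
    (h : (y * conj x).re ≤ |(y * conj x).im|) :
    π / 4 ≤ InnerProductGeometry.angle x y := by
  have hcos : inner ℝ x y / (‖x‖ * ‖y‖) ≤ √2 / 2 := by
    refine div_le_of_le_mul₀ (by positivity) (by positivity) ?_
    have := re_le_sqrt_two_div_two_mul_norm_of_re_le_abs_im h
    rwa [Complex.inner, norm_mul, norm_conj, mul_comm ‖y‖] at *
  calc π / 4 = arccos (√2 / 2) := by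
        rw [← cos_pi_div_four, arccos_cos (by positivity) (by linarith [pi_pos])]
    _ ≤ InnerProductGeometry.angle x y := arccos_le_arccos hcos

theorem stmt_11_general (a b : ℂ) (p : ℂ)
    (hp : ∃ t u : ℝ, t ∈ Set.Icc (0 : ℝ) 1 ∧ u ∈ Set.Icc (0 : ℝ) 1 ∧
      p = a + t • (b - a) + u • (Complex.I * (b - a))) :
    Real.pi / 4 ≤ EuclideanGeometry.angle a p b := by
  obtain ⟨t, u, ⟨ht0, ht1⟩, ⟨hu0, hu1⟩, rfl⟩ := hp
  rw [EuclideanGeometry.angle, vsub_eq_sub, vsub_eq_sub]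
  refine pi_div_four_le_angle_of_re_le_abs_im ?_
  set q := a + t • (b - a) + u • (I * (b - a))
  obtain ⟨hre, him⟩ : ((b - q) * conj (a - q)).re = (t ^ 2 + u ^ 2 - t) * normSq (b - a) ∧
      ((b - q) * conj (a - q)).im = u * normSq (b - a) := by
    simp only [q, mul_re, mul_im, sub_re, sub_im, add_re, add_im, conj_re, conj_im, real_smul,
      ofReal_re, ofReal_im, I_re, I_im, normSq_apply]
    constructor <;> ring
  have hN := normSq_nonneg (b - a)
  rw [hre, him, abs_of_nonneg (mul_nonneg hu0 hN)]
  exact mul_le_mul_of_nonneg_right (by nlinarith) hN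

/-- Observation 5 (obs:0): any point `p` of the square with side the segment from
`a` to `b` (in the Euclidean plane ℂ), other than `a` and `b` themselves, sees
that side under an angle of at least `π/4`. -/
theorem stmt_11 (a b : ℂ) (hab : a ≠ b) (p : ℂ)
    (hp : ∃ t u : ℝ, t ∈ Set.Icc (0 : ℝ) 1 ∧ u ∈ Set.Icc (0 : ℝ) 1 ∧
      p = a + t • (b - a) + u • (Complex.I * (b - a)))
    (hpa : p ≠ a) (hpb : p ≠ b) :
    Real.pi / 4 ≤ EuclideanGeometry.angle a p b :=
  stmt_11_general a b p hp
end

section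
/- For every z ∈ ℝ² (with the Euclidean metric), the set of pairs (m, n) ∈ ℤ² such that the half-open tile [m/2, (m+1)/2) × [n/2, (n+1)/2) has nonempty intersection with the closed Euclidean disk of radius 1 centered at z is finite and has cardinality at most 23. -/
set_option maxHeartbeats 2000000

/-- k ≥ 7 case of Observation 6 (obs:contain): a closed Euclidean disk of radius 1
centered at `z ∈ ℝ²` meets at most 23 of the half-open tiles
`[m/2,(m+1)/2) × [n/2,(n+1)/2)`, `(m,n) ∈ ℤ²`, of the grid of side 1/2. -/
theorem stmt_13 (z : ℝ × ℝ) :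
    {mn : ℤ × ℤ |
      ((Set.Ico ((mn.1 : ℝ) / 2) (((mn.1 : ℝ) + 1) / 2) ×ˢ
          Set.Ico ((mn.2 : ℝ) / 2) (((mn.2 : ℝ) + 1) / 2)) ∩
        {x : ℝ × ℝ | (x.1 - z.1) ^ 2 + (x.2 - z.2) ^ 2 ≤ 1}).Nonempty}.Finite ∧
    {mn : ℤ × ℤ |
      ((Set.Ico ((mn.1 : ℝ) / 2) (((mn.1 : ℝ) + 1) / 2) ×ˢ
          Set.Ico ((mn.2 : ℝ) / 2) (((mn.2 : ℝ) + 1) / 2)) ∩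
        {x : ℝ × ℝ | (x.1 - z.1) ^ 2 + (x.2 - z.2) ^ 2 ≤ 1}).Nonempty}.ncard ≤ 23 := by
  set S := {mn : ℤ × ℤ |
      ((Set.Ico ((mn.1 : ℝ) / 2) (((mn.1 : ℝ) + 1) / 2) ×ˢ
          Set.Ico ((mn.2 : ℝ) / 2) (((mn.2 : ℝ) + 1) / 2)) ∩
        {x : ℝ × ℝ | (x.1 - z.1) ^ 2 + (x.2 - z.2) ^ 2 ≤ 1}).Nonempty} with hS
  set a : ℤ := ⌊2 * z.1⌋ with ha
  set b : ℤ := ⌊2 * z.2⌋ with hb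
  have haf : (a : ℝ) ≤ 2 * z.1 := Int.floor_le _
  have haf' : 2 * z.1 < (a : ℝ) + 1 := Int.lt_floor_add_one _
  have hbf : (b : ℝ) ≤ 2 * z.2 := Int.floor_le _
  have hbf' : 2 * z.2 < (b : ℝ) + 1 := Int.lt_floor_add_one _
  set T : Finset (ℤ × ℤ) := Finset.Icc (a-2) (a+2) ×ˢ Finset.Icc (b-2) (b+2) with hT
  have hwit : ∀ mn ∈ S, ∃ x : ℝ × ℝ,
      ((mn.1 : ℝ) / 2 ≤ x.1 ∧ x.1 < ((mn.1 : ℝ) + 1) / 2) ∧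
      ((mn.2 : ℝ) / 2 ≤ x.2 ∧ x.2 < ((mn.2 : ℝ) + 1) / 2) ∧
      (x.1 - z.1) ^ 2 + (x.2 - z.2) ^ 2 ≤ 1 := by
    rintro mn ⟨x, ⟨⟨h1, h2⟩, hd⟩⟩
    exact ⟨x, ⟨h1.1, h1.2⟩, ⟨h2.1, h2.2⟩, hd⟩
  have hsub : S ⊆ ↑T := by
    intro mn hmn
    obtain ⟨x, ⟨hx1, hx1'⟩, ⟨hx2, hx2'⟩, hd⟩ := hwit mn hmn
    have h1 : (x.1 - z.1) ^ 2 ≤ 1 := by nlinarith [sq_nonneg (x.2 - z.2)]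
    have h2 : (x.2 - z.2) ^ 2 ≤ 1 := by nlinarith [sq_nonneg (x.1 - z.1)]
    have h1' : x.1 - z.1 ≤ 1 ∧ -1 ≤ x.1 - z.1 := by
      constructor <;> nlinarith
    have h2' : x.2 - z.2 ≤ 1 ∧ -1 ≤ x.2 - z.2 := by
      constructor <;> nlinarith
    have hm1 : (a : ℝ) - 3 < (mn.1 : ℝ) := by linarith
    have hm2 : (mn.1 : ℝ) < (a : ℝ) + 3 := by linarith
    have hn1 : (b : ℝ) - 3 < (mn.2 : ℝ) := by linarith
    have hn2 : (mn.2 : ℝ) < (b : ℝ) + 3 := by linarith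
    have hm1' : a - 3 < mn.1 := by exact_mod_cast (by push_cast; linarith : ((a - 3 : ℤ) : ℝ) < (mn.1 : ℝ))
    have hm2' : mn.1 < a + 3 := by exact_mod_cast (by push_cast; linarith : ((mn.1 : ℤ) : ℝ) < ((a + 3 : ℤ) : ℝ))
    have hn1' : b - 3 < mn.2 := by exact_mod_cast (by push_cast; linarith : ((b - 3 : ℤ) : ℝ) < (mn.2 : ℝ))
    have hn2' : mn.2 < b + 3 := by exact_mod_cast (by push_cast; linarith : ((mn.2 : ℤ) : ℝ) < ((b + 3 : ℤ) : ℝ))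
    simp only [hT, Finset.coe_product, Set.mem_prod, Finset.coe_Icc, Set.mem_Icc]
    omega
  have hfin : S.Finite := Set.Finite.subset T.finite_toSet hsub
  refine ⟨hfin, ?_⟩
  -- opposite corners cannot both be in S
  have hcorner : ∀ s t : ℤ × ℤ, s.1 + 2 ≤ t.1 - 2 + 1 → True := fun _ _ _ => trivial
  have hdiag : ¬ ((a - 2, b - 2) ∈ S ∧ (a + 2, b + 2) ∈ S) := by
    rintro ⟨h1, h2⟩
    obtain ⟨p, ⟨hp1, hp1'⟩, ⟨hp2, hp2'⟩, hpd⟩ := hwit _ h1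
    obtain ⟨q, ⟨hq1, hq1'⟩, ⟨hq2, hq2'⟩, hqd⟩ := hwit _ h2
    simp only at hp1 hp1' hp2 hp2' hq1 hq1' hq2 hq2'
    push_cast at hp1 hp1' hp2 hp2' hq1 hq1' hq2 hq2'
    have g1 : q.1 - p.1 > 3/2 := by linarith
    have g2 : q.2 - p.2 > 3/2 := by linarith
    have gb : (q.1 - p.1)^2 + (q.2 - p.2)^2 ≤ 4 := by
      nlinarith [sq_nonneg (p.1 - z.1 + (q.1 - z.1)), sq_nonneg (p.2 - z.2 + (q.2 - z.2))]
    have s1 : ((3:ℝ)/2)^2 < (q.1 - p.1)^2 := by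
      apply pow_lt_pow_left₀ g1 (by norm_num) (by norm_num)
    have s2 : ((3:ℝ)/2)^2 < (q.2 - p.2)^2 := by
      apply pow_lt_pow_left₀ g2 (by norm_num) (by norm_num)
    norm_num at s1 s2
    linarith
  have hanti : ¬ ((a - 2, b + 2) ∈ S ∧ (a + 2, b - 2) ∈ S) := by
    rintro ⟨h1, h2⟩
    obtain ⟨p, ⟨hp1, hp1'⟩, ⟨hp2, hp2'⟩, hpd⟩ := hwit _ h1
    obtain ⟨q, ⟨hq1, hq1'⟩, ⟨hq2, hq2'⟩, hqd⟩ := hwit _ h2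
    simp only at hp1 hp1' hp2 hp2' hq1 hq1' hq2 hq2'
    push_cast at hp1 hp1' hp2 hp2' hq1 hq1' hq2 hq2'
    have g1 : q.1 - p.1 > 3/2 := by linarith
    have g2 : p.2 - q.2 > 3/2 := by linarith
    have gb : (q.1 - p.1)^2 + (p.2 - q.2)^2 ≤ 4 := by
      nlinarith [sq_nonneg (p.1 - z.1 + (q.1 - z.1)), sq_nonneg (p.2 - z.2 + (q.2 - z.2))]
    have s1 : ((3:ℝ)/2)^2 < (q.1 - p.1)^2 := by
      apply pow_lt_pow_left₀ g1 (by norm_num) (by norm_num)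
    have s2 : ((3:ℝ)/2)^2 < (p.2 - q.2)^2 := by
      apply pow_lt_pow_left₀ g2 (by norm_num) (by norm_num)
    norm_num at s1 s2
    linarith
  rw [not_and_or] at hdiag hanti
  have hTcard : T.card = 25 := by
    rw [hT, Finset.card_product, Int.card_Icc, Int.card_Icc]
    have h1 : a + 2 + 1 - (a - 2) = 5 := by ring
    have h2 : b + 2 + 1 - (b - 2) = 5 := by ring
    rw [h1, h2]; rfl
  have hmemT : ∀ c : ℤ × ℤ, a - 2 ≤ c.1 → c.1 ≤ a + 2 → b - 2 ≤ c.2 → c.2 ≤ b + 2 → c ∈ T := by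
    intro c h1 h2 h3 h4
    rw [hT, Finset.mem_product, Finset.mem_Icc, Finset.mem_Icc]
    exact ⟨⟨h1, h2⟩, ⟨h3, h4⟩⟩
  have main : ∀ c c' : ℤ × ℤ, c ∈ T → c' ∈ T → c ≠ c' → c ∉ S → c' ∉ S → S.ncard ≤ 23 := by
    intro c c' hcT hc'T hne hcS hc'S
    have hsub2 : S ⊆ ↑((T.erase c).erase c') := by
      intro mn hmn
      refine Finset.mem_coe.mpr (Finset.mem_erase.mpr ⟨?_, Finset.mem_erase.mpr ⟨?_, hsub hmn⟩⟩)
      · rintro rfl; exact hc'S hmn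
      · rintro rfl; exact hcS hmn
    calc S.ncard ≤ ((T.erase c).erase c').card := by
          rw [← Set.ncard_coe_finset]
          exact Set.ncard_le_ncard hsub2 (Finset.finite_toSet _)
      _ = 23 := by
          rw [Finset.card_erase_of_mem (Finset.mem_erase.mpr ⟨hne.symm, hc'T⟩),
              Finset.card_erase_of_mem hcT, hTcard]
  obtain hc1 | hc1 := hdiag <;> obtain hc2 | hc2 := hanti
  · exact main _ _ (hmemT _ (by omega) (by omega) (by omega) (by omega))
      (hmemT _ (by omega) (by omega) (by omega) (by omega)) (by simp; omega) hc1 hc2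
  · exact main _ _ (hmemT _ (by omega) (by omega) (by omega) (by omega))
      (hmemT _ (by omega) (by omega) (by omega) (by omega)) (by simp; omega) hc1 hc2
  · exact main _ _ (hmemT _ (by omega) (by omega) (by omega) (by omega))
      (hmemT _ (by omega) (by omega) (by omega) (by omega)) (by simp; omega) hc1 hc2
  · exact main _ _ (hmemT _ (by omega) (by omega) (by omega) (by omega))
      (hmemT _ (by omega) (by omega) (by omega) (by omega)) (by simp; omega) hc1 hc2
end

section
/- Let S = [b₁, b₁ + √2] × [b₂, b₂ + √2] be a closed axis-aligned square of side length √2 in ℝ². If S has nonempty intersection with the tile [−1/4, 1/4] × [−1/4, 1/4], then S contains at least one of the four points (5/8, 5/8), (−5/8, 5/8), (−5/8, −5/8), (5/8, −5/8). -/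
lemma aux_1d (b : ℝ) (h1 : b ≤ 1/4) (h2 : -(1/4) ≤ b + Real.sqrt 2) :
    (b ≤ 5/8 ∧ 5/8 ≤ b + Real.sqrt 2) ∨ (b ≤ -(5/8) ∧ -(5/8) ≤ b + Real.sqrt 2) := by
  have hs : (5/4 : ℝ) ≤ Real.sqrt 2 := by
    nlinarith [Real.sq_sqrt (by norm_num : (2:ℝ) ≥ 0), Real.sqrt_nonneg 2]
  rcases le_or_gt b (-(5/8)) with hb | hb
  · right; constructor
    · exact hb
    · linarith
  · left; constructor
    · linarith
    · linarith

/-- Square case of Observation 7 (obs:inter): every closed axis-aligned square of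
side length √2 meeting the tile `[−1/4, 1/4]²` contains one of the four quadrant
centers `(±5/8, ±5/8)` of the super-square. -/
theorem stmt_14 (b : ℝ × ℝ)
    (h : ((Set.Icc b.1 (b.1 + Real.sqrt 2) ×ˢ Set.Icc b.2 (b.2 + Real.sqrt 2)) ∩
        (Set.Icc (-(1 / 4) : ℝ) (1 / 4) ×ˢ Set.Icc (-(1 / 4) : ℝ) (1 / 4))).Nonempty) :
    ((5 / 8 : ℝ), (5 / 8 : ℝ)) ∈
        Set.Icc b.1 (b.1 + Real.sqrt 2) ×ˢ Set.Icc b.2 (b.2 + Real.sqrt 2) ∨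
    ((-(5 / 8) : ℝ), (5 / 8 : ℝ)) ∈
        Set.Icc b.1 (b.1 + Real.sqrt 2) ×ˢ Set.Icc b.2 (b.2 + Real.sqrt 2) ∨
    ((-(5 / 8) : ℝ), (-(5 / 8) : ℝ)) ∈
        Set.Icc b.1 (b.1 + Real.sqrt 2) ×ˢ Set.Icc b.2 (b.2 + Real.sqrt 2) ∨
    ((5 / 8 : ℝ), (-(5 / 8) : ℝ)) ∈
        Set.Icc b.1 (b.1 + Real.sqrt 2) ×ˢ Set.Icc b.2 (b.2 + Real.sqrt 2) := by
  obtain ⟨⟨x, y⟩, ⟨⟨⟨hx1, hx2⟩, ⟨hy1, hy2⟩⟩, ⟨⟨hx3, hx4⟩, ⟨hy3, hy4⟩⟩⟩⟩ := h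
  have H1 := aux_1d b.1 (by linarith) (by linarith)
  have H2 := aux_1d b.2 (by linarith) (by linarith)
  rcases H1 with ⟨a1, a2⟩ | ⟨a1, a2⟩ <;> rcases H2 with ⟨c1, c2⟩ | ⟨c1, c2⟩
  · exact Or.inl ⟨⟨a1, a2⟩, ⟨c1, c2⟩⟩
  · exact Or.inr (Or.inr (Or.inr ⟨⟨a1, a2⟩, ⟨c1, c2⟩⟩))
  · exact Or.inr (Or.inl ⟨⟨a1, a2⟩, ⟨c1, c2⟩⟩)
  · exact Or.inr (Or.inr (Or.inl ⟨⟨a1, a2⟩, ⟨c1, c2⟩⟩))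
end

section
/- Let o = (5/8, 5/8) ∈ ℝ² with the Euclidean metric. Then for all points x, y ∈ [−1/4, 1/4] × [−1/4, 1/4], the Euclidean angle ∠ x o y at the vertex o is strictly less than π/4. -/
/-! Seen from `o`, a point `x` of the tile gives the vector `u = o - x` in the square
`[3/8, 7/8]²`. In the plane `‖u‖²‖v‖² = ⟪u, v⟫² + (u × v)²`, so `∠ u v < π/4` as soon as
`|u × v| < ⟪u, v⟫`. On a square `[m, M]²` with `M < (1 + √2) m` this is a pair of bilinear
inequalities, and `7/8 < (1 + √2) · 3/8`. -/

open Real InnerProductGeometry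
open scoped RealInnerProductSpace

theorem InnerProductGeometry.angle_lt_pi_div_four_of_norm_sq_mul_norm_sq_lt
    {V : Type*} [NormedAddCommGroup V] [InnerProductSpace ℝ V] {u v : V}
    (hpos : 0 < ⟪u, v⟫) (h : ‖u‖ ^ 2 * ‖v‖ ^ 2 < 2 * ⟪u, v⟫ ^ 2) :
    angle u v < π / 4 := by
  have hnorm : 0 < ‖u‖ * ‖v‖ := hpos.trans_le (real_inner_le_norm u v)
  have hlt : √2 / 2 < ⟪u, v⟫ / (‖u‖ * ‖v‖) := by
    rw [lt_div_iff₀ hnorm]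
    refine lt_of_pow_lt_pow_left₀ 2 hpos.le ?_
    rw [div_mul_eq_mul_div, div_pow, mul_pow, sq_sqrt zero_le_two]
    nlinarith
  have hle : ⟪u, v⟫ / (‖u‖ * ‖v‖) ≤ 1 :=
    (abs_le.1 (abs_real_inner_div_norm_mul_norm_le_one u v)).2
  calc angle u v = arccos (⟪u, v⟫ / (‖u‖ * ‖v‖)) := rfl
    _ < arccos (√2 / 2) := arccos_lt_arccos (by linarith [sqrt_nonneg 2]) hlt hle
    _ = π / 4 := by rw [← cos_pi_div_four, arccos_cos (by positivity) (by linarith [pi_pos])]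

theorem EuclideanSpace.angle_lt_pi_div_four_of_abs_mul_sub_mul_lt (u v : EuclideanSpace ℝ (Fin 2))
    (h : |u 0 * v 1 - u 1 * v 0| < u 0 * v 0 + u 1 * v 1) : angle u v < π / 4 := by
  have hinner : ⟪u, v⟫ = u 0 * v 0 + u 1 * v 1 := by
    simp only [PiLp.inner_apply, RCLike.inner_apply, conj_trivial, Fin.sum_univ_two]
    ring
  have lagrange : ‖u‖ ^ 2 * ‖v‖ ^ 2 = ⟪u, v⟫ ^ 2 + (u 0 * v 1 - u 1 * v 0) ^ 2 := by
    simp only [EuclideanSpace.real_norm_sq_eq, Fin.sum_univ_two, hinner]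
    ring
  rw [← hinner] at h
  have hcross : (u 0 * v 1 - u 1 * v 0) ^ 2 < ⟪u, v⟫ ^ 2 :=
    sq_lt_sq.2 (h.trans_le (le_abs_self _))
  exact angle_lt_pi_div_four_of_norm_sq_mul_norm_sq_lt ((abs_nonneg _).trans_lt h) (by linarith)

theorem mul_sub_add_mul_add_pos {m M a b c d : ℝ} (hm : 0 < m)
    (hM : M ^ 2 < 2 * m * M + m ^ 2)
    (ha : a ∈ Set.Icc m M) (hb : b ∈ Set.Icc m M) (hc : c ∈ Set.Icc m M)
    (hd : d ∈ Set.Icc m M) :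
    0 < a * (c - d) + b * (c + d) := by
  obtain ⟨ha, ha'⟩ := ha
  obtain ⟨hb, hb'⟩ := hb
  obtain ⟨hc, hc'⟩ := hc
  obtain ⟨hd, hd'⟩ := hd
  rcases le_total d c with hdc | hcd
  · nlinarith [mul_nonneg (by linarith : 0 ≤ a) (sub_nonneg.2 hdc)]
  · nlinarith [mul_nonneg (sub_nonneg.2 ha') (sub_nonneg.2 hcd),
      mul_nonneg (sub_nonneg.2 hb) (by linarith : 0 ≤ c + d),
      mul_nonneg (by linarith : 0 ≤ M + m) (sub_nonneg.2 hc),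
      mul_nonneg (by linarith : 0 ≤ M - m) (sub_nonneg.2 hd')]

theorem abs_mul_sub_mul_lt_mul_add_mul {m M a b c d : ℝ} (hm : 0 < m)
    (hM : M ^ 2 < 2 * m * M + m ^ 2)
    (ha : a ∈ Set.Icc m M) (hb : b ∈ Set.Icc m M) (hc : c ∈ Set.Icc m M)
    (hd : d ∈ Set.Icc m M) :
    |a * d - b * c| < a * c + b * d := by
  have h₁ := mul_sub_add_mul_add_pos hm hM ha hb hc hd
  have h₂ := mul_sub_add_mul_add_pos hm hM hb ha hd hc
  rw [abs_lt]
  constructor <;> linarith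

/-- Square case of Lemma 7 (lemma:cone): from the apex `o = (5/8, 5/8)` (a quadrant
center of the super-square), any two points of the tile `[−1/4, 1/4]²` are seen
under a Euclidean angle strictly less than `π/4`. Points are in the Euclidean
plane `EuclideanSpace ℝ (Fin 2)`. -/
theorem stmt_15 (o x y : EuclideanSpace ℝ (Fin 2))
    (ho0 : o 0 = 5 / 8) (ho1 : o 1 = 5 / 8)
    (hx0 : x 0 ∈ Set.Icc (-(1 / 4) : ℝ) (1 / 4))
    (hx1 : x 1 ∈ Set.Icc (-(1 / 4) : ℝ) (1 / 4))
    (hy0 : y 0 ∈ Set.Icc (-(1 / 4) : ℝ) (1 / 4))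
    (hy1 : y 1 ∈ Set.Icc (-(1 / 4) : ℝ) (1 / 4)) :
    EuclideanGeometry.angle x o y < Real.pi / 4 := by
  rw [EuclideanGeometry.angle, ← angle_neg_neg, neg_vsub_eq_vsub_rev, neg_vsub_eq_vsub_rev]
  apply EuclideanSpace.angle_lt_pi_div_four_of_abs_mul_sub_mul_lt
  have shift : ∀ {t : ℝ}, t ∈ Set.Icc (-(1 / 4)) (1 / 4) →
      5 / 8 - t ∈ Set.Icc (3 / 8 : ℝ) (7 / 8) :=
    fun ht ↦ ⟨by linarith [ht.2], by linarith [ht.1]⟩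
  simpa only [vsub_eq_sub, PiLp.sub_apply, ho0, ho1] using
    abs_mul_sub_mul_lt_mul_add_mul (by norm_num) (by norm_num)
      (shift hx0) (shift hx1) (shift hy0) (shift hy1)
end

section
/- Let k ≥ 4 be an integer, let c ∈ ℂ, let r > 0, and let λ be a real number with 1/2 ≤ λ ≤ 1. Let v_j = c + r·exp(2πij/k) for j = 0, …, k−1, and let σ be the convex hull of {v_0, …, v_{k−1}} in ℂ. For a point p ∈ ℂ define the shrunk copy σ_p = {p + λ·(x − p) : x ∈ σ}. Then σ = σ_c ∪ ⋃_{j=0}^{k−1} σ_{v_j}. -/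
/-!
Since the copy of a convex set `σ` shrunk towards `p ∈ σ` grows with the ratio, it suffices
to treat `λ = 1/2`: for every `x ∈ σ` we need a centre `p ∈ {c, v₀, …, v_{k-1}}` with
`2x - p ∈ σ`. Write `x = c + A (v_m - c) + B (v_{m+1} - c)` in a triangle `c v_m v_{m+1}`
of the fan triangulation. If `A + B ≤ 1/2` take `p = c`, if `A ≥ 1/2` take `p = v_m`.
Otherwise, say `B ≤ A`, `2x - v_m` is a convex combination of `c`, `v_{m+1}` and
`c + (v_{m+1} - v_m)/2`. The last point lies in `σ` because the half-edge `r sin (π/k)` is at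
most the inradius `r cos (π/k)`, which is exactly where `k ≥ 4` enters.
-/

open Complex
open scoped Real

/-- Reduced to `(-π, π]`, the angle is an odd multiple of `π / k`, so at least `π / k` in
absolute value. -/
theorem Real.cos_odd_mul_pi_div_le {k : ℕ} (hk : 0 < k) (n : ℤ) :
    Real.cos ((2 * n + 1) * (π / k)) ≤ Real.cos (π / k) := by
  have hkR : (0 : ℝ) < k := by exact_mod_cast hk
  set q := toIocDiv Real.two_pi_pos (-π) ((2 * n + 1) * (π / k))
  have hy := toIocMod_mem_Ioc Real.two_pi_pos (-π) ((2 * n + 1) * (π / k))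
  set e : ℤ := 2 * n + 1 - 2 * k * q
  have hxy : (2 * n + 1) * (π / k) - q * (2 * π) = e * (π / k) := by
    simp only [e]; push_cast; field_simp
  have he : (1 : ℝ) ≤ |(e : ℝ)| := by
    rw [← Int.cast_abs]; exact_mod_cast Int.one_le_abs (by simp only [e, mul_assoc]; omega)
  rw [← self_sub_toIocDiv_zsmul, zsmul_eq_mul, hxy] at hy
  rw [← Real.cos_sub_int_mul_two_pi _ q, hxy, ← Real.cos_abs]
  apply Real.cos_le_cos_of_nonneg_of_le_pi (by positivity)
  · rw [abs_le]; constructor <;> linarith [hy.1, hy.2]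
  · rw [abs_mul, abs_of_pos (by positivity : 0 < π / k)]
    nlinarith [div_pos Real.pi_pos hkR]

theorem sin_mul_exp_mul_I (φ χ : ℝ) :
    (Real.sin φ : ℂ) * exp (χ * I) = Real.sin (φ - χ) + Real.sin χ * exp (φ * I) := by
  rw [exp_mul_I, exp_mul_I, Real.sin_sub]; push_cast; ring

theorem exists_smul_add_smul_zpow_exp {φ : ℝ} (hφ₀ : 0 < φ) (hφ : φ < π) (z : ℂ) :
    ∃ m : ℤ, ∃ A B : ℝ, 0 ≤ A ∧ 0 ≤ B ∧ z = A • exp (φ * I) ^ m + B • exp (φ * I) ^ (m + 1) := by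
  set m := toIcoDiv hφ₀ 0 (arg z)
  set χ := toIcoMod hφ₀ 0 (arg z)
  have hχ : χ ∈ Set.Ico 0 (0 + φ) := toIcoMod_mem_Ico _ _ _
  have harg : arg z = m * φ + χ := by
    have := self_sub_toIcoDiv_zsmul hφ₀ 0 (arg z)
    rw [zsmul_eq_mul] at this; linarith
  have hsin : (Real.sin φ : ℂ) ≠ 0 := by
    exact_mod_cast (Real.sin_pos_of_pos_of_lt_pi hφ₀ hφ).ne'
  refine ⟨m, ‖z‖ * Real.sin (φ - χ) / Real.sin φ, ‖z‖ * Real.sin χ / Real.sin φ, ?_, ?_, ?_⟩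
  · have := Real.sin_nonneg_of_nonneg_of_le_pi (x := φ - χ) (by linarith [hχ.2])
      (by linarith [hχ.1])
    have := Real.sin_pos_of_pos_of_lt_pi hφ₀ hφ
    positivity
  · have := Real.sin_nonneg_of_nonneg_of_le_pi (x := χ) hχ.1 (by linarith [hχ.2])
    have := Real.sin_pos_of_pos_of_lt_pi hφ₀ hφ
    positivity
  · calc z = ‖z‖ * exp (φ * I) ^ m * exp (χ * I) := by
          rw [← exp_int_mul, mul_assoc, ← exp_add]
          conv_lhs => rw [← norm_mul_exp_arg_mul_I z, harg]
          push_cast; ring_nf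
      _ = _ := by
          rw [← mul_div_cancel_right₀ (exp (χ * I)) hsin, mul_comm _ (Real.sin φ : ℂ),
            sin_mul_exp_mul_I, zpow_add_one₀ (exp_ne_zero _), real_smul, real_smul]
          push_cast; ring

section Homothety

variable {E : Type*} [AddCommGroup E] [Module ℝ E] {s : Set E}

theorem Convex.add_smul_add_smul_mem (hs : Convex ℝ s) {c u w : E} (hc : c ∈ s)
    (hu : c + u ∈ s) (hw : c + w ∈ s) {a b : ℝ} (ha : 0 ≤ a) (hb : 0 ≤ b) (hab : a + b ≤ 1) :
    c + a • u + b • w ∈ s := by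
  have h := hs.sum_mem (t := Finset.univ) (w := ![1 - a - b, a, b]) (z := ![c, c + u, c + w])
    (by intro i _; fin_cases i <;> simp <;> linarith)
    (by simp [Fin.sum_univ_three]; ring)
    (by intro i _; fin_cases i <;> assumption)
  convert h using 1
  simp only [Fin.sum_univ_three, Matrix.cons_val_zero, Matrix.cons_val_one, Matrix.cons_val_two,
    Matrix.head_cons, Matrix.tail_cons]
  module

theorem Convex.image_homothety_subset (hs : Convex ℝ s) {p : E} (hp : p ∈ s) {t : ℝ}
    (ht₀ : 0 ≤ t) (ht₁ : t ≤ 1) : (fun x => p + t • (x - p)) '' s ⊆ s := by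
  rintro - ⟨x, hx, rfl⟩
  exact hs.add_smul_sub_mem hp hx ⟨ht₀, ht₁⟩

theorem Convex.image_homothety_mono (hs : Convex ℝ s) {p : E} (hp : p ∈ s) {t t' : ℝ}
    (ht : 0 < t) (htt' : t ≤ t') :
    (fun x => p + t • (x - p)) '' s ⊆ (fun x => p + t' • (x - p)) '' s := by
  rintro - ⟨x, hx, rfl⟩
  have ht' : t' ≠ 0 := (ht.trans_le htt').ne'
  refine ⟨p + (t / t') • (x - p), hs.add_smul_sub_mem hp hx ⟨?_, ?_⟩, ?_⟩
  · exact div_nonneg ht.le (ht.le.trans htt')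
  · exact div_le_one_of_le₀ htt' (ht.le.trans htt')
  · simp only [add_sub_cancel_left, smul_smul, mul_div_cancel₀ t ht']

theorem mem_image_half_homothety_iff {p x : E} :
    x ∈ (fun y => p + (1 / 2 : ℝ) • (y - p)) '' s ↔ (2 : ℝ) • x - p ∈ s := by
  constructor
  · rintro ⟨y, hy, rfl⟩
    convert hy using 1
    module
  · exact fun h => ⟨_, h, by module⟩

theorem Convex.exists_mem_image_half_homothety_of_le (hs : Convex ℝ s) {c u w : E}
    (hc : c ∈ s) (hu : c + u ∈ s) (hw : c + w ∈ s) (hwu : c + (1 / 2 : ℝ) • (w - u) ∈ s)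
    {A B : ℝ} (hA : 0 ≤ A) (hB : 0 ≤ B) (hAB : A + B ≤ 1) (hBA : B ≤ A) :
    ∃ p ∈ ({c, c + u} : Set E),
      c + A • u + B • w ∈ (fun y => p + (1 / 2 : ℝ) • (y - p)) '' s := by
  simp only [Set.mem_insert_iff, Set.mem_singleton_iff, exists_eq_or_imp, exists_eq_left,
    mem_image_half_homothety_iff]
  rcases le_or_gt (A + B) (1 / 2) with hsmall | hlarge
  · left
    convert hs.add_smul_add_smul_mem hc hu hw (a := 2 * A) (b := 2 * B) (by linarith)
      (by linarith) (by linarith) using 1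
    module
  right
  rcases le_or_gt (1 / 2) A with hA' | hA'
  · convert hs.add_smul_add_smul_mem hc hu hw (a := 2 * A - 1) (b := 2 * B) (by linarith)
      (by linarith) (by linarith) using 1
    module
  · convert hs.add_smul_add_smul_mem hc hwu hw (a := 2 - 4 * A) (b := 2 * A + 2 * B - 1)
      (by linarith) (by linarith) (by linarith) using 1
    module

theorem Convex.exists_mem_image_half_homothety (hs : Convex ℝ s) {c u w : E}
    (hc : c ∈ s) (hu : c + u ∈ s) (hw : c + w ∈ s) (hwu : c + (1 / 2 : ℝ) • (w - u) ∈ s)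
    (huw : c + (1 / 2 : ℝ) • (u - w) ∈ s) {A B : ℝ} (hA : 0 ≤ A) (hB : 0 ≤ B)
    (hAB : A + B ≤ 1) :
    ∃ p ∈ ({c, c + u, c + w} : Set E),
      c + A • u + B • w ∈ (fun y => p + (1 / 2 : ℝ) • (y - p)) '' s := by
  rcases le_total B A with hBA | hAB'
  · obtain ⟨p, hp, hx⟩ := hs.exists_mem_image_half_homothety_of_le hc hu hw hwu hA hB hAB hBA
    refine ⟨p, ?_, hx⟩
    rcases hp with rfl | rfl <;> simp
  · obtain ⟨p, hp, hx⟩ := hs.exists_mem_image_half_homothety_of_le hc hw hu huw hB hA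
      (by linarith) hAB'
    refine ⟨p, ?_, by rwa [add_right_comm]⟩
    rcases hp with rfl | rfl <;> simp

end Homothety

noncomputable def regularPolygon (k : ℕ) (c : ℂ) (r : ℝ) : Set ℂ :=
  convexHull ℝ (Set.range fun j : Fin k => c + r * exp (2 * π * I / k) ^ (j : ℕ))

namespace regularPolygon

variable {k : ℕ} {c x : ℂ} {r : ℝ}

local notation "ζ" => exp (2 * π * I / k)

theorem convex : Convex ℝ (regularPolygon k c r) := convex_convexHull ℝ _

theorem zpow_eq_exp (m : ℤ) : ζ ^ m = exp ((2 * m * (π / k) : ℝ) * I) := by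
  rw [← exp_int_mul]; push_cast; ring_nf

theorem exists_fin_pow_eq_zpow (hk : 0 < k) (m : ℤ) : ∃ j : Fin k, ζ ^ (j : ℕ) = ζ ^ m := by
  have h₀ : 0 ≤ m % k := Int.emod_nonneg m (by exact_mod_cast hk.ne')
  have hlt : m % k < k := Int.emod_lt_of_pos m (by exact_mod_cast hk)
  refine ⟨⟨(m % k).toNat, by omega⟩, ?_⟩
  rw [← zpow_natCast, Int.toNat_of_nonneg h₀]
  conv_rhs => rw [← Int.emod_add_mul_ediv m k, zpow_add₀ (exp_ne_zero _), zpow_mul,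
    (isPrimitiveRoot_exp k hk.ne').zpow_eq_one, one_zpow, mul_one]

theorem add_mul_zpow_mem_range (hk : 0 < k) (m : ℤ) :
    c + r * ζ ^ m ∈ Set.range fun j : Fin k => c + r * ζ ^ (j : ℕ) :=
  let ⟨j, hj⟩ := exists_fin_pow_eq_zpow hk m
  ⟨j, by dsimp only; rw [hj]⟩

theorem add_mul_zpow_mem (hk : 0 < k) (m : ℤ) : c + r * ζ ^ m ∈ regularPolygon k c r :=
  subset_convexHull ℝ _ (add_mul_zpow_mem_range hk m)

theorem center_mem (hk : 1 < k) : c ∈ regularPolygon k c r := by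
  have h := (convex (k := k) (c := c) (r := r)).sum_mem (t := Finset.univ)
    (w := fun _ => (1 / k : ℝ)) (fun _ _ => by positivity)
    (by simp only [Finset.sum_const, Finset.card_univ, Fintype.card_fin, nsmul_eq_mul]
        field_simp)
    (fun j _ => subset_convexHull ℝ _ ⟨j, rfl⟩)
  convert h using 1
  simp only [real_smul, mul_add, Finset.sum_add_distrib, ← Finset.mul_sum,
    Fin.sum_univ_eq_sum_range (fun j => ζ ^ j),
    (isPrimitiveRoot_exp k (by omega)).geom_sum_eq_zero hk,
    Finset.sum_const, Finset.card_univ, Fintype.card_fin, nsmul_eq_mul, mul_zero, add_zero]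
  have hk' : (k : ℂ) ≠ 0 := by exact_mod_cast (by omega : k ≠ 0)
  push_cast
  field_simp

theorem re_exp_mul_zpow (θ : ℝ) (m : ℤ) :
    (exp (θ * I) * ζ ^ m).re = Real.cos (θ + 2 * m * (π / k)) := by
  rw [zpow_eq_exp, ← exp_add, ← add_mul, ← ofReal_add, exp_ofReal_mul_I_re]

/-- The edge from `c + r ζ ^ m` to `c + r ζ ^ (m + 1)` has outward unit normal
`exp ((2m + 1) π i / k)` and lies at distance `r cos (π / k)` from `c`. -/
theorem re_exp_mul_sub_le_of_mem (hk : 0 < k) (hr : 0 ≤ r) (m : ℤ)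
    (hx : x ∈ regularPolygon k c r) :
    (exp ((-(2 * m + 1) * (π / k) : ℝ) * I) * (x - c)).re ≤ r * Real.cos (π / k) := by
  set a := exp ((-(2 * m + 1) * (π / k) : ℝ) * I)
  have hlin : IsLinearMap ℝ fun y : ℂ => (a * y).re :=
    ⟨fun y z => by simp only [mul_add, add_re], fun t y => by simp [mul_left_comm a]⟩
  suffices x ∈ (· + -c) ⁻¹' {y | (a * y).re ≤ r * Real.cos (π / k)} by
    simpa only [sub_eq_add_neg, Set.mem_preimage, Set.mem_ofPred_eq] using this
  refine convexHull_min ?_ ((convex_halfSpace_le hlin _).translate_preimage_left (-c)) hx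
  rintro - ⟨j, rfl⟩
  have h := Real.cos_odd_mul_pi_div_le hk (j - m - 1)
  simp only [Set.mem_preimage, Set.mem_ofPred_eq, ← sub_eq_add_neg, add_sub_cancel_left,
    mul_left_comm a, re_ofReal_mul, ← zpow_natCast, a, re_exp_mul_zpow]
  refine mul_le_mul_of_nonneg_left (le_of_eq_of_le ?_ h) hr
  push_cast; ring_nf

theorem re_exp_mul_smul_add_smul_zpow (m : ℤ) (A B : ℝ) :
    (exp ((-(2 * m + 1) * (π / k) : ℝ) * I) * (A • ζ ^ m + B • ζ ^ (m + 1))).re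
      = (A + B) * Real.cos (π / k) := by
  simp only [real_smul, mul_add, mul_left_comm _ (A : ℂ), mul_left_comm _ (B : ℂ), add_re,
    re_ofReal_mul, re_exp_mul_zpow]
  push_cast
  rw [show -(2 * m + 1) * (π / k) + 2 * m * (π / k) = -(π / k) by ring,
    show -(2 * m + 1) * (π / k) + 2 * (m + 1) * (π / k) = π / k by ring, Real.cos_neg]
  ring

theorem exists_smul_add_smul_of_forall_re_le (hk : 3 ≤ k) (hr : 0 < r)
    (hx : ∀ m : ℤ,
      (exp ((-(2 * m + 1) * (π / k) : ℝ) * I) * (x - c)).re ≤ r * Real.cos (π / k)) :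
    ∃ m : ℤ, ∃ A B : ℝ, 0 ≤ A ∧ 0 ≤ B ∧ A + B ≤ 1 ∧
      x = c + A • (r * ζ ^ m) + B • (r * ζ ^ (m + 1)) := by
  have hkR : (3 : ℝ) ≤ k := by exact_mod_cast hk
  have hcos : 0 < Real.cos (π / k) := Real.cos_pos_of_mem_Ioo ⟨by
    linarith [Real.pi_pos, div_pos Real.pi_pos (by positivity : (0 : ℝ) < k)], by
    rw [div_lt_div_iff₀ (by positivity) two_pos]; nlinarith [Real.pi_pos]⟩
  have hζ : ζ = exp ((2 * π / k : ℝ) * I) := by push_cast; ring_nf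
  obtain ⟨m, A, B, hA, hB, hz⟩ := exists_smul_add_smul_zpow_exp (φ := 2 * π / k)
    (by positivity) (by rw [div_lt_iff₀ (by positivity)]; nlinarith [Real.pi_pos]) ((x - c) / r)
  rw [← hζ] at hz
  have hxc : x - c = r * (A • ζ ^ m + B • ζ ^ (m + 1)) := by
    rw [← hz, mul_div_cancel₀ _ (by exact_mod_cast hr.ne')]
  refine ⟨m, A, B, hA, hB, ?_, ?_⟩
  · have h := hx m
    rw [hxc, mul_left_comm, re_ofReal_mul, re_exp_mul_smul_add_smul_zpow] at h
    nlinarith [mul_pos hr hcos]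
  · rw [← mul_smul_comm, ← mul_smul_comm, add_assoc, ← mul_add, ← hxc, add_sub_cancel]

theorem mem_iff (hk : 3 ≤ k) (hr : 0 < r) :
    x ∈ regularPolygon k c r ↔ ∃ m : ℤ, ∃ A B : ℝ, 0 ≤ A ∧ 0 ≤ B ∧ A + B ≤ 1 ∧
      x = c + A • (r * ζ ^ m) + B • (r * ζ ^ (m + 1)) := by
  constructor
  · exact fun hx => exists_smul_add_smul_of_forall_re_le hk hr
      fun m => re_exp_mul_sub_le_of_mem (by omega) hr.le m hx
  · rintro ⟨m, A, B, hA, hB, hAB, rfl⟩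
    exact convex.add_smul_add_smul_mem (center_mem (by omega)) (add_mul_zpow_mem (by omega) m)
      (add_mul_zpow_mem (by omega) (m + 1)) hA hB hAB

theorem closedBall_subset (hk : 3 ≤ k) (hr : 0 < r) :
    Metric.closedBall c (r * Real.cos (π / k)) ⊆ regularPolygon k c r := by
  intro x hx
  rw [mem_iff hk hr]
  refine exists_smul_add_smul_of_forall_re_le hk hr fun m => ?_
  calc _ ≤ ‖exp ((-(2 * m + 1) * (π / k) : ℝ) * I) * (x - c)‖ := re_le_norm _
    _ = dist x c := by rw [norm_mul, norm_exp_ofReal_mul_I, one_mul, dist_eq_norm]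
    _ ≤ _ := hx

theorem norm_zpow_add_one_sub_zpow_le (hk : 4 ≤ k) (m : ℤ) :
    ‖ζ ^ (m + 1) - ζ ^ m‖ ≤ 2 * Real.cos (π / k) := by
  have hkR : (4 : ℝ) ≤ k := by exact_mod_cast hk
  have hα₀ : 0 ≤ π / k := by positivity
  have hα : π / k ≤ π / 4 := div_le_div_of_nonneg_left Real.pi_pos.le (by norm_num) hkR
  have hζ : ζ = exp (I * (2 * (π / k) : ℝ)) := by push_cast; ring_nf
  have hζ₁ : ‖ζ‖ = 1 := by rw [hζ, mul_comm, norm_exp_ofReal_mul_I]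
  rw [zpow_add_one₀ (exp_ne_zero _), ← mul_sub_one, norm_mul, norm_zpow, hζ₁, one_zpow,
    one_mul, hζ, norm_exp_I_mul_ofReal_sub_one, mul_div_cancel_left₀ _ two_ne_zero,
    Real.norm_eq_abs,
    abs_of_nonneg (by nlinarith [Real.sin_nonneg_of_nonneg_of_le_pi hα₀ (by linarith)]),
    ← Real.sin_pi_div_two_sub]
  gcongr
  exact Real.sin_le_sin_of_le_of_le_pi_div_two (by linarith) (by linarith) (by linarith)

theorem exists_mem_image_half_homothety (hk : 4 ≤ k) (hr : 0 < r)
    (hx : x ∈ regularPolygon k c r) :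
    ∃ p ∈ insert c (Set.range fun j : Fin k => c + r * ζ ^ (j : ℕ)),
      x ∈ (fun y => p + (1 / 2 : ℝ) • (y - p)) '' regularPolygon k c r := by
  obtain ⟨m, A, B, hA, hB, hAB, rfl⟩ := (mem_iff (by omega) hr).1 hx
  have hchord : ∀ u w : ℂ, ‖w - u‖ ≤ 2 * (r * Real.cos (π / k)) →
      c + (1 / 2 : ℝ) • (w - u) ∈ regularPolygon k c r := fun u w h => by
    refine closedBall_subset (by omega) hr ?_
    rw [Metric.mem_closedBall, dist_eq_norm, add_sub_cancel_left, norm_smul, Real.norm_eq_abs,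
      abs_of_pos one_half_pos]
    linarith
  have hedge : ‖r * ζ ^ (m + 1) - r * ζ ^ m‖ ≤ 2 * (r * Real.cos (π / k)) := by
    rw [← mul_sub, norm_mul, norm_real, Real.norm_of_nonneg hr.le]
    nlinarith [norm_zpow_add_one_sub_zpow_le hk m]
  obtain ⟨p, hp, hxp⟩ := convex.exists_mem_image_half_homothety (center_mem (by omega))
    (add_mul_zpow_mem (by omega) m) (add_mul_zpow_mem (by omega) (m + 1)) (hchord _ _ hedge)
    (hchord _ _ (by rwa [norm_sub_rev])) hA hB hAB
  refine ⟨p, ?_, hxp⟩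
  rcases hp with rfl | rfl | rfl
  · exact Set.mem_insert _ _
  · exact Set.mem_insert_of_mem _ (add_mul_zpow_mem_range (by omega) m)
  · exact Set.mem_insert_of_mem _ (add_mul_zpow_mem_range (by omega) (m + 1))

end regularPolygon

/-- Lemma 10 (lem:shrunk): a regular k-gon (k ≥ 4) `σ` in ℂ, with center `c`,
circumradius `r` and vertices `v j = c + r·exp(2πij/k)`, equals the union of its
shrunk set: the homothetic copies of `σ` of ratio `λ ∈ [1/2, 1]` centered at `c`
and at each vertex `v j`. -/
theorem stmt_16 (k : ℕ) (hk : 4 ≤ k) (c : ℂ) (r : ℝ) (hr : 0 < r)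
    (lam : ℝ) (hlam1 : 1 / 2 ≤ lam) (hlam2 : lam ≤ 1) :
    let v : Fin k → ℂ := fun j =>
      c + (r : ℂ) * Complex.exp (2 * Real.pi * Complex.I * (j : ℕ) / k)
    let σ : Set ℂ := convexHull ℝ (Set.range v)
    let shrink : ℂ → Set ℂ := fun p => (fun x => p + lam • (x - p)) '' σ
    σ = shrink c ∪ ⋃ j, shrink (v j) := by
  intro v σ shrink
  have hv : v = fun j : Fin k => c + r * exp (2 * π * I / k) ^ (j : ℕ) := by
    funext j; simp only [v, ← exp_nat_mul]; ring_nf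
  have hσ : σ = regularPolygon k c r := by simp only [σ, hv, regularPolygon]
  have hconv : Convex ℝ σ := convex_convexHull ℝ _
  have hc : c ∈ σ := hσ ▸ regularPolygon.center_mem (by omega)
  have hvσ : ∀ j, v j ∈ σ := fun j => subset_convexHull ℝ _ ⟨j, rfl⟩
  have hlam0 : 0 ≤ lam := by linarith
  refine subset_antisymm (fun x hx => ?_) (Set.union_subset
    (hconv.image_homothety_subset hc hlam0 hlam2)
    (Set.iUnion_subset fun j => hconv.image_homothety_subset (hvσ j) hlam0 hlam2))
  obtain ⟨p, hp, hxp⟩ := regularPolygon.exists_mem_image_half_homothety hk hr (hσ ▸ hx)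
  rw [← hσ] at hxp
  rw [← hv] at hp
  rcases hp with rfl | ⟨j, rfl⟩
  · exact Or.inl (hconv.image_homothety_mono hc one_half_pos hlam1 hxp)
  · exact Or.inr (Set.mem_iUnion.2 ⟨j, hconv.image_homothety_mono (hvσ j) one_half_pos hlam1 hxp⟩)
end
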